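/- arXiv:2204.09178 — 3 statements merged into one kernel-verified Lean document; each statement's English description precedes it below -/
import Mathlib

section
/- Let G = (V, E) be a hypergraph, let U be a non-empty proper subset of V, let S ⊆ U be non-empty, and let T ⊆ V∖U be non-empty. Suppose that every minimum (S, V∖U)-terminal cut (A, V∖A) satisfies δ(A) = δ(U), and that every minimum (U, T)-terminal cut (A, V∖A) satisfies δ(A) = δ(U). Then the source minimal minimum (S,T)-terminal cut (Y, V∖Y) satisfies Y ⊆ U and δ(Y) = δ(U). -/
open Finset
open scoped Classical

variable {V : Type} [Fintype V] [DecidableEq V]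

/-- The set of hyperedges crossing the cut `(U, Uᶜ)`. -/
noncomputable def cross (E : Finset (Finset V)) (U : Finset V) : Finset (Finset V) :=
  E.filter fun e => (e ∩ U).Nonempty ∧ (e ∩ Uᶜ).Nonempty

/-- The cut value `d(U)`. -/
noncomputable def cutVal (E : Finset (Finset V)) (U : Finset V) : ℕ := (cross E U).card

/-- `P` is a `k`-partition of the vertex set. -/
def IsPartition {k : ℕ} (P : Fin k → Finset V) : Prop :=
  (∀ i, (P i).Nonempty) ∧ (∀ i j, i ≠ j → Disjoint (P i) (P j)) ∧
    Finset.univ.biUnion P = Finset.univ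

/-- The set of hyperedges crossing the partition `P`. -/
noncomputable def crossPart {k : ℕ} (E : Finset (Finset V)) (P : Fin k → Finset V) :
    Finset (Finset V) :=
  E.filter fun e => ∃ i j : Fin k, i ≠ j ∧ (e ∩ P i).Nonempty ∧ (e ∩ P j).Nonempty

/-- Optimum value of Hypergraph-k-Cut. -/
noncomputable def OPTkcut (E : Finset (Finset V)) (k : ℕ) : ℕ :=
  sInf {m | ∃ P : Fin k → Finset V, IsPartition P ∧ (crossPart E P).card = m}

/-- Optimum value of Minmax-Hypergraph-k-Partition. -/
noncomputable def OPTminmax (E : Finset (Finset V)) (k : ℕ) : ℕ :=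
  sInf {m | ∃ P : Fin k → Finset V, IsPartition P ∧
    (Finset.univ.sup fun i => cutVal E (P i)) = m}

/-- `(A, Aᶜ)` is an `(S,T)`-terminal cut: `S ⊆ A ⊆ Tᶜ`. -/
def IsSTcut (S T A : Finset V) : Prop := S ⊆ A ∧ A ⊆ Tᶜ

/-- `(A, Aᶜ)` is a minimum `(S,T)`-terminal cut. -/
def IsMinSTcut (E : Finset (Finset V)) (S T A : Finset V) : Prop :=
  IsSTcut S T A ∧ ∀ B : Finset V, IsSTcut S T B → cutVal E A ≤ cutVal E B

lemma mem_cross {E : Finset (Finset V)} {X e : Finset V} :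
    e ∈ cross E X ↔ e ∈ E ∧ (∃ x ∈ e, x ∈ X) ∧ (∃ x ∈ e, x ∉ X) := by
  simp [cross, Finset.Nonempty, Finset.mem_inter, and_assoc]

lemma cross_submod (E : Finset (Finset V)) (A B : Finset V) :
    cutVal E (A ∩ B) + cutVal E (A ∪ B) ≤ cutVal E A + cutVal E B := by
  unfold cutVal
  have hsub1 : cross E (A ∩ B) ∪ cross E (A ∪ B) ⊆ cross E A ∪ cross E B := by
    intro e he
    rw [Finset.mem_union] at he
    rw [Finset.mem_union, mem_cross, mem_cross]
    rcases he with h | h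
    · rw [mem_cross] at h
      obtain ⟨hEe, ⟨x, hx, hxAB⟩, ⟨y, hy, hyn⟩⟩ := h
      rw [Finset.mem_inter] at hxAB
      by_cases hyA : y ∈ A
      · have hyB : y ∉ B := fun h => hyn (Finset.mem_inter.mpr ⟨hyA, h⟩)
        exact Or.inr ⟨hEe, ⟨x, hx, hxAB.2⟩, ⟨y, hy, hyB⟩⟩
      · exact Or.inl ⟨hEe, ⟨x, hx, hxAB.1⟩, ⟨y, hy, hyA⟩⟩
    · rw [mem_cross] at h
      obtain ⟨hEe, ⟨x, hx, hxAB⟩, ⟨y, hy, hyn⟩⟩ := h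
      have hyA : y ∉ A := fun h => hyn (Finset.mem_union_left _ h)
      have hyB : y ∉ B := fun h => hyn (Finset.mem_union_right _ h)
      rcases Finset.mem_union.mp hxAB with hxA | hxB
      · exact Or.inl ⟨hEe, ⟨x, hx, hxA⟩, ⟨y, hy, hyA⟩⟩
      · exact Or.inr ⟨hEe, ⟨x, hx, hxB⟩, ⟨y, hy, hyB⟩⟩
  have hsub2 : cross E (A ∩ B) ∩ cross E (A ∪ B) ⊆ cross E A ∩ cross E B := by
    intro e he
    rw [Finset.mem_inter] at he
    obtain ⟨h1, h2⟩ := he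
    rw [mem_cross] at h1 h2
    obtain ⟨hEe, ⟨x, hx, hxAB⟩, -⟩ := h1
    obtain ⟨-, -, ⟨z, hz, hzn⟩⟩ := h2
    rw [Finset.mem_inter] at hxAB
    have hzA : z ∉ A := fun h => hzn (Finset.mem_union_left _ h)
    have hzB : z ∉ B := fun h => hzn (Finset.mem_union_right _ h)
    rw [Finset.mem_inter, mem_cross, mem_cross]
    exact ⟨⟨hEe, ⟨x, hx, hxAB.1⟩, ⟨z, hz, hzA⟩⟩, hEe, ⟨x, hx, hxAB.2⟩, ⟨z, hz, hzB⟩⟩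
  calc (cross E (A ∩ B)).card + (cross E (A ∪ B)).card
      = (cross E (A ∩ B) ∪ cross E (A ∪ B)).card
        + (cross E (A ∩ B) ∩ cross E (A ∪ B)).card :=
        (Finset.card_union_add_card_inter _ _).symm
    _ ≤ (cross E A ∪ cross E B).card + (cross E A ∩ cross E B).card :=
        add_le_add (Finset.card_le_card hsub1) (Finset.card_le_card hsub2)
    _ = (cross E A).card + (cross E B).card :=
        Finset.card_union_add_card_inter _ _

theorem stmt3
    (E : Finset (Finset V)) (hE : ∀ e ∈ E, e.Nonempty)
    (U : Finset V) (hUne : U.Nonempty) (hUproper : U ≠ Finset.univ)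
    (S T : Finset V) (hSne : S.Nonempty) (hSU : S ⊆ U)
    (hTne : T.Nonempty) (hTU : T ⊆ Uᶜ)
    (hS : ∀ A : Finset V, IsMinSTcut E S Uᶜ A → cross E A = cross E U)
    (hT : ∀ A : Finset V, IsMinSTcut E U T A → cross E A = cross E U) :
    ∀ Y : Finset V, IsMinSTcut E S T Y →
      (∀ A : Finset V, IsMinSTcut E S T A → Y ⊆ A) →
      Y ⊆ U ∧ cross E Y = cross E U := by
  intro Y hY hYmin
  have hUTcomp : U ⊆ Tᶜ := by
    intro x hx
    simp only [Finset.mem_compl]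
    intro hxT
    have := hTU hxT
    simp only [Finset.mem_compl] at this
    exact this hx
  have hUcut : IsSTcut U T U := ⟨subset_rfl, hUTcomp⟩
  -- U is a minimum (U,T)-terminal cut
  have hUminT : IsMinSTcut E U T U := by
    obtain ⟨B, hBmem, hBmin⟩ := Finset.exists_min_image
      ((Finset.univ : Finset (Finset V)).filter (fun B => IsSTcut U T B))
      (cutVal E) ⟨U, by simp [hUcut]⟩
    simp only [Finset.mem_filter, Finset.mem_univ, true_and] at hBmem
    have hBminCut : IsMinSTcut E U T B := by
      refine ⟨hBmem, fun C hC => hBmin C ?_⟩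
      simp [hC]
    have hcrossB := hT B hBminCut
    have hvalB : cutVal E B = cutVal E U := by unfold cutVal; rw [hcrossB]
    refine ⟨hUcut, fun C hC => ?_⟩
    rw [← hvalB]
    exact hBmin C (by simp [hC])
  obtain ⟨⟨hSY, hYT⟩, hYopt⟩ := hY
  -- Y ∩ U is an (S,T)-cut
  have hIntCut : IsSTcut S T (Y ∩ U) :=
    ⟨Finset.subset_inter hSY hSU, (Finset.inter_subset_left).trans hYT⟩
  -- Y ∪ U is a (U,T)-cut
  have hUnCut : IsSTcut U T (Y ∪ U) :=
    ⟨Finset.subset_union_right, Finset.union_subset hYT hUTcomp⟩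
  have hsub := cross_submod E Y U
  have hU_le : cutVal E U ≤ cutVal E (Y ∪ U) := hUminT.2 _ hUnCut
  have hY_le : cutVal E Y ≤ cutVal E (Y ∩ U) := hYopt _ hIntCut
  have hInt_le : cutVal E (Y ∩ U) ≤ cutVal E Y := by omega
  have hIntMin : IsMinSTcut E S T (Y ∩ U) :=
    ⟨hIntCut, fun C hC => hInt_le.trans (hYopt C hC)⟩
  have hYU : Y ⊆ U := by
    have := hYmin _ hIntMin
    exact this.trans Finset.inter_subset_right
  refine ⟨hYU, ?_⟩
  -- Y is a minimum (S, Uᶜ)-terminal cut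
  have hYcutSU : IsSTcut S Uᶜ Y := ⟨hSY, by rwa [compl_compl]⟩
  have hYminSU : IsMinSTcut E S Uᶜ Y := by
    refine ⟨hYcutSU, fun B hB => ?_⟩
    have hBST : IsSTcut S T B := by
      refine ⟨hB.1, ?_⟩
      have : B ⊆ U := by rw [← compl_compl U]; exact hB.2
      exact this.trans hUTcomp
    exact hYopt B hBST
  exact hS Y hYminSU
end

section
/- Let G = (V, E) be a hypergraph, let S, T ⊆ V be disjoint non-empty subsets, and let U be a subset with S ⊆ U ⊆ V∖T such that d(U) equals the minimum value of an (S,T)-terminal cut. Suppose the source minimal minimum (S,T)-terminal cut (Y, V∖Y) satisfies δ(Y) = δ(U), and the source minimal minimum (T,S)-terminal cut (Z, V∖Z) satisfies δ(Z) = δ(U). Then every minimum (S,T)-terminal cut (A, V∖A) satisfies δ(A) = δ(U). -/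
open Finset
open scoped Classical

variable {V : Type} [Fintype V] [DecidableEq V]

lemma cross_compl (E : Finset (Finset V)) (A : Finset V) :
    cross E Aᶜ = cross E A := by
  unfold cross
  apply Finset.filter_congr
  intro e _
  simp only [compl_compl]
  tauto

theorem stmt4
    (E : Finset (Finset V)) (hE : ∀ e ∈ E, e.Nonempty)
    (S T : Finset V) (hSne : S.Nonempty) (hTne : T.Nonempty) (hST : Disjoint S T)
    (U : Finset V) (hSU : S ⊆ U) (hUT : U ⊆ Tᶜ)
    (hUmin : ∀ B : Finset V, IsSTcut S T B → cutVal E U ≤ cutVal E B)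
    (Y : Finset V) (hY : IsMinSTcut E S T Y)
    (hYmin : ∀ A : Finset V, IsMinSTcut E S T A → Y ⊆ A)
    (hYδ : cross E Y = cross E U)
    (Z : Finset V) (hZ : IsMinSTcut E T S Z)
    (hZmin : ∀ A : Finset V, IsMinSTcut E T S A → Z ⊆ A)
    (hZδ : cross E Z = cross E U) :
    ∀ A : Finset V, IsMinSTcut E S T A → cross E A = cross E U := by
  intro A hA
  have hYA : Y ⊆ A := hYmin A hA
  have hAcompl : IsMinSTcut E T S Aᶜ := by
    refine ⟨⟨?_, ?_⟩, ?_⟩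
    · intro t ht
      simp only [Finset.mem_compl]
      intro htA
      exact Finset.mem_compl.mp (hA.1.2 htA) ht
    · intro a ha
      simp only [Finset.mem_compl] at ha ⊢
      exact fun hs => ha (hA.1.1 hs)
    · intro B hB
      have hBc : IsSTcut S T Bᶜ := by
        constructor
        · intro s hs
          simp only [Finset.mem_compl]
          exact fun h => Finset.mem_compl.mp (hB.2 h) hs
        · intro b hb
          simp only [Finset.mem_compl] at hb ⊢
          exact fun ht => hb (hB.1 ht)
      have := hA.2 Bᶜ hBc
      unfold cutVal
      rw [cross_compl]
      unfold cutVal at this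
      rwa [cross_compl] at this
  have hZA : Z ⊆ Aᶜ := hZmin Aᶜ hAcompl
  have hsub : cross E U ⊆ cross E A := by
    intro f hf
    have hfY : f ∈ cross E Y := hYδ ▸ hf
    have hfZ : f ∈ cross E Z := hZδ ▸ hf
    unfold cross at hfY hfZ ⊢
    simp only [Finset.mem_filter] at hfY hfZ ⊢
    refine ⟨hfY.1, ?_, ?_⟩
    · obtain ⟨x, hx⟩ := hfY.2.1
      simp only [Finset.mem_inter] at hx
      exact ⟨x, Finset.mem_inter.mpr ⟨hx.1, hYA hx.2⟩⟩
    · obtain ⟨x, hx⟩ := hfZ.2.1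
      simp only [Finset.mem_inter] at hx
      exact ⟨x, Finset.mem_inter.mpr ⟨hx.1, hZA hx.2⟩⟩
  have hcard : (cross E A).card ≤ (cross E U).card :=
    hA.2 U ⟨hSU, hUT⟩
  exact (Finset.eq_of_subset_of_card_le hsub hcard).symm
end

section
/- Let G = (V, E) be a hypergraph, let k ≥ 2 be an integer with |V| ≥ k, and let (V_1, …, V_k) be a k-partition of V with |δ(V_1, …, V_k)| = OPT_{k-cut}(G). Let 1 ≤ h < k and U := V_1 ∪ … ∪ V_h. Then (V_1, …, V_h) is an h-partition of U, the set of hyperedges of G[U] crossing (V_1, …, V_h) equals {e ∈ δ(V_1, …, V_k) : e ⊆ U}, and |δ_{G[U]}(V_1, …, V_h)| = OPT_{h-cut}(G[U]); that is, {e ∈ δ(V_1, …, V_k) : e ⊆ U} is a min-h-cut-set of the induced subhypergraph G[U]. -/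
open Finset
open scoped Classical

variable {V : Type} [Fintype V] [DecidableEq V]

/-- `P` is a `k`-partition of the vertex set `W`. -/
def IsPartitionOn (W : Finset V) {k : ℕ} (P : Fin k → Finset V) : Prop :=
  (∀ i, (P i).Nonempty) ∧ (∀ i j, i ≠ j → Disjoint (P i) (P j)) ∧
    Finset.univ.biUnion P = W

/-- Optimum value of Hypergraph-k-Cut on the hypergraph with vertex set `W`
and hyperedge set `E`. -/
noncomputable def OPTkcutOn (W : Finset V) (E : Finset (Finset V)) (k : ℕ) : ℕ :=
  sInf {m | ∃ P : Fin k → Finset V, IsPartitionOn W P ∧ (crossPart E P).card = m}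

/-- Restriction lemma: if all parts with index `≥ h` are disjoint from `U`, then the
crossing hyperedges of the restricted partition on edges inside `U` are exactly the
crossing hyperedges of the full partition contained in `U`. -/
lemma crossPart_restrict (E : Finset (Finset V)) (U : Finset V) {k h : ℕ} (hhk : h ≤ k)
    (P : Fin k → Finset V) (hdisj : ∀ j : Fin k, ¬ ((j : ℕ) < h) → Disjoint (P j) U) :
    crossPart (E.filter fun e => e ⊆ U) (fun i : Fin h => P (Fin.castLE hhk i)) =
      (crossPart E P).filter (fun e => e ⊆ U) := by
  classical
  ext e
  simp only [crossPart, Finset.mem_filter]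
  constructor
  · rintro ⟨⟨he, hsub⟩, i, j, hij, hi, hj⟩
    exact ⟨⟨he, Fin.castLE hhk i, Fin.castLE hhk j,
      fun hc => hij (Fin.castLE_injective hhk hc), hi, hj⟩, hsub⟩
  · rintro ⟨⟨he, i, j, hij, hi, hj⟩, hsub⟩
    have hlt : ∀ m : Fin k, (e ∩ P m).Nonempty → (m : ℕ) < h := by
      intro m hm
      by_contra hmh
      obtain ⟨x, hx⟩ := hm
      simp only [Finset.mem_inter] at hx
      exact Finset.disjoint_left.1 (hdisj m hmh) hx.2 (hsub hx.1)
    have hih := hlt i hi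
    have hjh := hlt j hj
    refine ⟨⟨he, hsub⟩, ⟨(i : ℕ), hih⟩, ⟨(j : ℕ), hjh⟩, ?_, ?_, ?_⟩
    · intro hc
      apply hij
      exact Fin.ext (Fin.mk_eq_mk.1 hc)
    · have : Fin.castLE hhk ⟨(i : ℕ), hih⟩ = i := Fin.ext rfl
      rw [this]; exact hi
    · have : Fin.castLE hhk ⟨(j : ℕ), hjh⟩ = j := Fin.ext rfl
      rw [this]; exact hj

theorem stmt12
    (E : Finset (Finset V)) (hE : ∀ e ∈ E, e.Nonempty)
    (k : ℕ) (hk : 2 ≤ k) (hkn : k ≤ Fintype.card V)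
    (P : Fin k → Finset V) (hP : IsPartition P)
    (hopt : (crossPart E P).card = OPTkcut E k)
    (h : ℕ) (hh1 : 1 ≤ h) (hhk : h < k)
    (U : Finset V)
    (hU : U = (Finset.univ.filter fun i : Fin k => (i : ℕ) < h).biUnion P)
    (Q : Fin h → Finset V) (hQ : Q = fun i : Fin h => P (Fin.castLE hhk.le i)) :
    IsPartitionOn U Q ∧
    crossPart (E.filter fun e => e ⊆ U) Q = (crossPart E P).filter (fun e => e ⊆ U) ∧
    (crossPart (E.filter fun e => e ⊆ U) Q).card = OPTkcutOn U (E.filter fun e => e ⊆ U) h := by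
  classical
  obtain ⟨hPne, hPdisj, hPuniv⟩ := hP
  have hmemU : ∀ x : V, x ∈ U ↔ ∃ i : Fin k, (i : ℕ) < h ∧ x ∈ P i := by
    intro x; subst hU; simp [Finset.mem_biUnion, and_comm]
  have hPsubU : ∀ i : Fin k, (i : ℕ) < h → P i ⊆ U := by
    intro i hi x hx
    exact (hmemU x).2 ⟨i, hi, hx⟩
  have hPdisjU : ∀ j : Fin k, ¬ ((j : ℕ) < h) → Disjoint (P j) U := by
    intro j hj
    rw [Finset.disjoint_right]
    intro x hxU hxP
    obtain ⟨i, hih, hxPi⟩ := (hmemU x).1 hxU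
    have hij : j ≠ i := by intro hc; subst hc; exact hj hih
    exact Finset.disjoint_left.1 (hPdisj j i hij) hxP hxPi
  -- Part 1 : Q is a partition of U
  have hpart : IsPartitionOn U Q := by
    refine ⟨fun i => by rw [hQ]; exact hPne _, ?_, ?_⟩
    · intro i j hij
      rw [hQ]
      exact hPdisj _ _ (fun hc => hij (Fin.castLE_injective hhk.le hc))
    · apply Finset.Subset.antisymm
      · intro x hx
        rw [Finset.mem_biUnion] at hx
        obtain ⟨i, _, hxQ⟩ := hx
        rw [hQ] at hxQ
        exact hPsubU _ (by simpa using i.isLt) hxQ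
      · intro x hx
        obtain ⟨i, hih, hxPi⟩ := (hmemU x).1 hx
        rw [Finset.mem_biUnion]
        refine ⟨⟨(i : ℕ), hih⟩, Finset.mem_univ _, ?_⟩
        rw [hQ]
        have : Fin.castLE hhk.le ⟨(i : ℕ), hih⟩ = i := Fin.ext rfl
        simpa [this] using hxPi
  -- Part 2 : the crossing-edge identity
  have hcrossQ : crossPart (E.filter fun e => e ⊆ U) Q =
      (crossPart E P).filter (fun e => e ⊆ U) := by
    rw [hQ]; exact crossPart_restrict E U hhk.le P hPdisjU
  refine ⟨hpart, hcrossQ, ?_⟩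
  -- Part 3 : optimality
  have hmain : ∀ R : Fin h → Finset V, IsPartitionOn U R →
      (crossPart (E.filter fun e => e ⊆ U) Q).card ≤
        (crossPart (E.filter fun e => e ⊆ U) R).card := by
    intro R hR
    obtain ⟨hRne, hRdisj, hRuni⟩ := hR
    have hRsubU : ∀ i : Fin h, R i ⊆ U := by
      intro i
      rw [← hRuni]
      exact Finset.subset_biUnion_of_mem R (Finset.mem_univ i)
    have hmemU' : ∀ x : V, x ∈ U ↔ ∃ l : Fin h, x ∈ R l := by
      intro x; rw [← hRuni]; simp [Finset.mem_biUnion]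
    -- the extended partition
    set P' : Fin k → Finset V :=
      fun i => if hi : (i : ℕ) < h then R ⟨(i : ℕ), hi⟩ else P i with hP'def
    have hP'lt : ∀ (i : Fin k) (hi : (i : ℕ) < h), P' i = R ⟨(i : ℕ), hi⟩ := by
      intro i hi; simp [hP'def, hi]
    have hP'ge : ∀ (i : Fin k), ¬ ((i : ℕ) < h) → P' i = P i := by
      intro i hi; simp [hP'def, hi]
    have hP'castLE : (fun i : Fin h => P' (Fin.castLE hhk.le i)) = R := by
      funext i
      rw [hP'lt _ (by simpa using i.isLt)]
      exact congrArg R (Fin.ext rfl)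
    have hP'disjU : ∀ j : Fin k, ¬ ((j : ℕ) < h) → Disjoint (P' j) U := by
      intro j hj; rw [hP'ge j hj]; exact hPdisjU j hj
    have hP'subU : ∀ (i : Fin k), (i : ℕ) < h → P' i ⊆ U := by
      intro i hi; rw [hP'lt i hi]; exact hRsubU _
    have hP'part : IsPartition P' := by
      refine ⟨?_, ?_, ?_⟩
      · intro i
        by_cases hi : (i : ℕ) < h
        · rw [hP'lt i hi]; exact hRne _
        · rw [hP'ge i hi]; exact hPne _
      · intro i j hij
        by_cases hi : (i : ℕ) < h <;> by_cases hj : (j : ℕ) < h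
        · rw [hP'lt i hi, hP'lt j hj]
          refine hRdisj _ _ ?_
          intro hc
          exact hij (Fin.ext (Fin.mk_eq_mk.1 hc))
        · rw [hP'lt i hi, hP'ge j hj]
          exact Finset.disjoint_of_subset_left (hRsubU _) (hPdisjU j hj).symm
        · rw [hP'ge i hi, hP'lt j hj]
          exact Finset.disjoint_of_subset_right (hRsubU _) (hPdisjU i hi)
        · rw [hP'ge i hi, hP'ge j hj]; exact hPdisj i j hij
      · apply Finset.Subset.antisymm (Finset.subset_univ _)
        intro x _
        rw [Finset.mem_biUnion]
        by_cases hxU : x ∈ U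
        · obtain ⟨l, hxl⟩ := (hmemU' x).1 hxU
          refine ⟨⟨(l : ℕ), lt_of_lt_of_le l.isLt hhk.le⟩, Finset.mem_univ _, ?_⟩
          rw [hP'lt _ (by simpa using l.isLt)]
          simpa using hxl
        · have hxuniv : x ∈ Finset.univ.biUnion P := by rw [hPuniv]; exact Finset.mem_univ x
          rw [Finset.mem_biUnion] at hxuniv
          obtain ⟨j, _, hxj⟩ := hxuniv
          have hjh : ¬ ((j : ℕ) < h) := fun hc => hxU (hPsubU j hc hxj)
          exact ⟨j, Finset.mem_univ _, by rw [hP'ge j hjh]; exact hxj⟩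
    -- crossing edges of P' inside U are those of R
    have hcrossR : crossPart (E.filter fun e => e ⊆ U) R =
        (crossPart E P').filter (fun e => e ⊆ U) := by
      rw [← hP'castLE]
      exact crossPart_restrict E U hhk.le P' hP'disjU
    -- crossing edges not inside U coincide for P and P'
    have hB : (crossPart E P').filter (fun e => ¬ e ⊆ U) =
        (crossPart E P).filter (fun e => ¬ e ⊆ U) := by
      have hiff : ∀ e : Finset V, ¬ e ⊆ U →
          ((∃ i j : Fin k, i ≠ j ∧ (e ∩ P' i).Nonempty ∧ (e ∩ P' j).Nonempty) ↔
            (∃ i j : Fin k, i ≠ j ∧ (e ∩ P i).Nonempty ∧ (e ∩ P j).Nonempty)) := by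
        intro e hnsub
        obtain ⟨x, hxe, hxU⟩ := Finset.not_subset.1 hnsub
        have hxuniv : x ∈ Finset.univ.biUnion P := by rw [hPuniv]; exact Finset.mem_univ x
        rw [Finset.mem_biUnion] at hxuniv
        obtain ⟨j₀, -, hxj₀⟩ := hxuniv
        have hj₀h : ¬ ((j₀ : ℕ) < h) := fun hc => hxU (hPsubU j₀ hc hxj₀)
        by_cases hcap : (e ∩ U).Nonempty
        · obtain ⟨y, hy⟩ := hcap
          rw [Finset.mem_inter] at hy
          obtain ⟨i₀, hi₀h, hyPi₀⟩ := (hmemU y).1 hy.2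
          obtain ⟨l₀, hyl₀⟩ := (hmemU' y).1 hy.2
          have hPside : ∃ i j : Fin k, i ≠ j ∧ (e ∩ P i).Nonempty ∧ (e ∩ P j).Nonempty := by
            refine ⟨i₀, j₀, ?_, ⟨y, Finset.mem_inter.2 ⟨hy.1, hyPi₀⟩⟩,
              ⟨x, Finset.mem_inter.2 ⟨hxe, hxj₀⟩⟩⟩
            intro hc; subst hc; exact hj₀h hi₀h
          have hP'side : ∃ i j : Fin k, i ≠ j ∧ (e ∩ P' i).Nonempty ∧ (e ∩ P' j).Nonempty := by
            have hl₀k : (l₀ : ℕ) < k := lt_of_lt_of_le l₀.isLt hhk.le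
            refine ⟨⟨(l₀ : ℕ), hl₀k⟩, j₀, ?_, ?_, ?_⟩
            · intro hc
              have : (l₀ : ℕ) = (j₀ : ℕ) := congrArg Fin.val hc
              exact hj₀h (this ▸ l₀.isLt)
            · rw [hP'lt _ (show ((⟨(l₀ : ℕ), hl₀k⟩ : Fin k) : ℕ) < h from l₀.isLt)]
              exact ⟨y, Finset.mem_inter.2 ⟨hy.1, by simpa using hyl₀⟩⟩
            · rw [hP'ge j₀ hj₀h]
              exact ⟨x, Finset.mem_inter.2 ⟨hxe, hxj₀⟩⟩
          exact iff_of_true hP'side hPside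
        · -- e is disjoint from U : only indices ≥ h matter, where P' = P
          have hgeP' : ∀ m : Fin k, (e ∩ P' m).Nonempty → ¬ ((m : ℕ) < h) := by
            intro m hm hmh
            obtain ⟨z, hz⟩ := hm
            rw [Finset.mem_inter] at hz
            exact hcap ⟨z, Finset.mem_inter.2 ⟨hz.1, hP'subU m hmh hz.2⟩⟩
          have hgeP : ∀ m : Fin k, (e ∩ P m).Nonempty → ¬ ((m : ℕ) < h) := by
            intro m hm hmh
            obtain ⟨z, hz⟩ := hm
            rw [Finset.mem_inter] at hz
            exact hcap ⟨z, Finset.mem_inter.2 ⟨hz.1, hPsubU m hmh hz.2⟩⟩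
          constructor
          · rintro ⟨i, j, hij, hi, hj⟩
            refine ⟨i, j, hij, ?_, ?_⟩
            · rwa [← hP'ge i (hgeP' i hi)]
            · rwa [← hP'ge j (hgeP' j hj)]
          · rintro ⟨i, j, hij, hi, hj⟩
            refine ⟨i, j, hij, ?_, ?_⟩
            · rwa [hP'ge i (hgeP i hi)]
            · rwa [hP'ge j (hgeP j hj)]
      ext e
      simp only [crossPart, Finset.mem_filter, and_assoc]
      constructor <;> rintro ⟨he, hcr, hnsub⟩
      · exact ⟨he, (hiff e hnsub).1 hcr, hnsub⟩
      · exact ⟨he, (hiff e hnsub).2 hcr, hnsub⟩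
    -- compare cardinalities
    have hle : (crossPart E P).card ≤ (crossPart E P').card := by
      rw [hopt]
      exact Nat.sInf_le ⟨P', hP'part, rfl⟩
    have hsplitP : ((crossPart E P).filter (fun e => e ⊆ U)).card +
        ((crossPart E P).filter (fun e => ¬ e ⊆ U)).card = (crossPart E P).card :=
      Finset.card_filter_add_card_filter_not _
    have hsplitP' : ((crossPart E P').filter (fun e => e ⊆ U)).card +
        ((crossPart E P').filter (fun e => ¬ e ⊆ U)).card = (crossPart E P').card :=
      Finset.card_filter_add_card_filter_not _
    rw [hcrossQ, hcrossR]
    have hBcard : ((crossPart E P').filter (fun e => ¬ e ⊆ U)).card =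
        ((crossPart E P).filter (fun e => ¬ e ⊆ U)).card := by rw [hB]
    omega
  apply le_antisymm
  · refine le_csInf ⟨_, Q, hpart, rfl⟩ ?_
    rintro m ⟨R, hR, rfl⟩
    exact hmain R hR
  · exact Nat.sInf_le ⟨Q, hpart, rfl⟩
end
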